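/- arXiv:2410.10312 — 2 statements merged into one kernel-verified Lean document; each statement's English description precedes it below -/
import Mathlib

section
/- For any real P > 0 and any integer k ≥ 2, the per-user symmetric capacity under joint decoding strictly exceeds the worst-user rate under successive decoding: (1/k)·(1/2)·log(1 + kP) > (1/2)·log(1 + P/(1 + (k-1)P)). -/
/-! As `1 + P/(1 + (k-1)P) = (1 + kP)/(1 + (k-1)P)`, the inequality reduces to
`(1 - 1/k)·log(1 + kP) < log(1 + (k-1)P)`. Here `1 + (k-1)P` is the convex combination of `1` and
`1 + kP` with weights `1/k` and `1 - 1/k`, so this is strict concavity of `log`, in the form of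
Bernoulli's inequality `(1 + kP)^(1 - 1/k) < 1 + (k-1)P`. -/

open Real

lemma one_sub_one_div_mul_log_one_add_mul_lt {s P : ℝ} (hs : 1 < s) (hP : 0 < P) :
    (1 - 1 / s) * log (1 + s * P) < log (1 + (s - 1) * P) := by
  have hs0 : 0 < s := by linarith
  have hsP : 0 < s * P := mul_pos hs0 hP
  have hbernoulli : (1 + s * P) ^ (1 - 1 / s) < 1 + (s - 1) * P := by
    calc (1 + s * P) ^ (1 - 1 / s) < 1 + (1 - 1 / s) * (s * P) :=
          rpow_one_add_lt_one_add_mul_self (by linarith) hsP.ne'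
            (sub_pos.2 ((div_lt_one hs0).2 hs)) (by simp [hs0])
      _ = 1 + (s - 1) * P := by field_simp
  rw [← log_rpow (by linarith)]
  exact log_lt_log (by positivity) hbernoulli

lemma one_add_div_one_add_mul (P c : ℝ) (h : 1 + c * P ≠ 0) :
    1 + P / (1 + c * P) = (1 + (c + 1) * P) / (1 + c * P) := by
  rw [eq_div_iff h, add_mul, div_mul_cancel₀ _ h]
  ring

theorem jnn_beats_sic_first_order (P : ℝ) (hP : 0 < P) (k : ℕ) (hk : 2 ≤ k) :
    (1 / (k : ℝ)) * ((1 / 2) * Real.log (1 + (k : ℝ) * P)) >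
      (1 / 2) * Real.log (1 + P / (1 + ((k : ℝ) - 1) * P)) := by
  have hk1 : (1 : ℝ) < k := by exact_mod_cast hk
  have hsic : 0 < 1 + ((k : ℝ) - 1) * P := by nlinarith
  have hjnn : 0 < 1 + (k : ℝ) * P := by nlinarith
  have hconcave := one_sub_one_div_mul_log_one_add_mul_lt hk1 hP
  rw [one_add_div_one_add_mul P _ hsic.ne', sub_add_cancel,
    log_div hjnn.ne' hsic.ne']
  linarith
end

section
/- For any real P > 0 and any integer k ≥ 2, the inequality (1 + kP)^(k-1) < (1 + (k-1)P)^k holds. -/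
theorem poly_ineq (P : ℝ) (hP : 0 < P) (k : ℕ) (hk : 2 ≤ k) :
    (1 + (k : ℝ) * P) ^ (k - 1) < (1 + ((k : ℝ) - 1) * P) ^ k := by
  induction k, hk using Nat.le_induction with
  | base =>
    norm_num
    nlinarith [sq_nonneg P]
  | succ n hn ih =>
    have hn1 : (n : ℝ) ≥ 2 := by exact_mod_cast hn
    set A : ℝ := 1 + ((n : ℝ) + 1) * P with hA
    set B : ℝ := 1 + ((n : ℝ) - 1) * P with hB
    set C : ℝ := 1 + (n : ℝ) * P with hC
    have hBpos : 0 < B := by nlinarith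
    have hCpos : 0 < C := by nlinarith
    have hApos : 0 < A := by nlinarith
    have hAB : A * B < C ^ 2 := by nlinarith [sq_nonneg P]
    have h1 : (A * B) ^ n < (C ^ 2) ^ n :=
      pow_lt_pow_left₀ hAB (le_of_lt (mul_pos hApos hBpos)) (by omega)
    have h2 : A ^ n * B ^ n < C ^ (2 * n) := by
      rw [← mul_pow]; rw [← pow_mul] at h1; exact h1
    have ihC : C ^ (n - 1) < B ^ n := ih
    have h3 : A ^ n * C ^ (n - 1) < A ^ n * B ^ n :=
      mul_lt_mul_of_pos_left ihC (pow_pos hApos n)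
    have h4 : A ^ n * C ^ (n - 1) < C ^ (n + 1) * C ^ (n - 1) := by
      rw [← pow_add]
      have : n + 1 + (n - 1) = 2 * n := by omega
      rw [this]
      exact lt_trans h3 h2
    have h5 : A ^ n < C ^ (n + 1) :=
      lt_of_mul_lt_mul_right h4 (le_of_lt (pow_pos hCpos _))
    simp only [Nat.add_sub_cancel, Nat.cast_add, Nat.cast_one, add_sub_cancel_right]
    exact h5
end
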